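/- The hyperspace C(ℝ) of nonempty closed connected subsets of the real line, with the topology induced by the extended Hausdorff metric, is homeomorphic to the disjoint union {0} ⊔ ℝ ⊔ ℝ ⊔ (ℝ × [0,∞)), via the map sending ℝ to the point 0, [a,∞) to a in the first copy of ℝ, (-∞,a] to a in the second copy of ℝ, and [a,b] to (a, b−a) ∈ ℝ × [0,∞). -/

import Mathlib

/-!
A closed connected subset of `ℝ` is `ℝ`, a closed half-line or a compact interval, and is
recovered from its finite endpoints `sInf`, `sSup`. Two such sets at finite Hausdorff distance
are bounded on the same sides, so the four kinds form clopen pieces of `C(ℝ)`. On each piece the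
endpoints are 1-Lipschitz, because the distance between the least (or greatest) elements is at
most the Hausdorff distance; conversely the Hausdorff distance between intervals is at most the
largest endpoint displacement, as clamping into the other interval shows. Hence the endpoint
coordinates and their inverse are both continuous.
-/

open Set TopologicalSpace

/-- The hyperspace `C(ℝ)` of nonempty closed connected subsets of `ℝ`, with the
topology induced by the extended-real-valued Hausdorff distance. -/
def CReal : Type := {A : Closeds ℝ // IsConnected (A : Set ℝ)}

noncomputable instance : EMetricSpace CReal := by unfold CReal; infer_instance

open Metric Filter Topology

theorem continuousAt_of_eventually_edist_le {α β : Type*} [PseudoEMetricSpace α]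
    [PseudoEMetricSpace β] {f : α → β} {x₀ : α}
    (h : ∀ᶠ x in 𝓝 x₀, edist (f x) (f x₀) ≤ edist x x₀) : ContinuousAt f x₀ :=
  EMetric.tendsto_nhds.2 fun _ hε =>
    (h.and (eball_mem_nhds x₀ hε)).mono fun _ hx => hx.1.trans_lt hx.2

theorem Metric.hausdorffEDist_neg {E : Type*} [SeminormedAddCommGroup E] (s t : Set E) :
    hausdorffEDist (-s) (-t) = hausdorffEDist s t := by
  rw [← image_neg_eq_neg, ← image_neg_eq_neg]
  exact hausdorffEDist_image isometry_neg

section ConditionallyComplete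

variable {α : Type*} [ConditionallyCompleteLinearOrder α] [TopologicalSpace α] [OrderTopology α]
  {s : Set α}

theorem eq_Ici_csInf_of_connected_bdd_closed (hc : IsConnected s) (hb : BddBelow s)
    (ha : ¬BddAbove s) (hcl : IsClosed s) : s = Ici (sInf s) :=
  Subset.antisymm (fun _ hx => csInf_le hb hx) <| Ioi_insert (a := sInf s) ▸
    insert_subset (hcl.csInf_mem hc.nonempty hb) (hc.isPreconnected.Ioi_csInf_subset hb ha)

theorem eq_Iic_csSup_of_connected_bdd_closed (hc : IsConnected s) (hb : ¬BddBelow s)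
    (ha : BddAbove s) (hcl : IsClosed s) : s = Iic (sSup s) :=
  eq_Ici_csInf_of_connected_bdd_closed (α := αᵒᵈ) hc ha hb hcl

end ConditionallyComplete

namespace Real

variable {s t : Set ℝ}

theorem edist_le_hausdorffEDist_of_isLeast {a b : ℝ} (ha : IsLeast s a) (hb : IsLeast t b) :
    edist a b ≤ hausdorffEDist s t := by
  wlog hab : a ≤ b generalizing s t a b
  · rw [edist_comm, hausdorffEDist_comm]
    exact this hb ha (le_of_not_ge hab)
  refine (le_infEDist.2 fun y hy => ?_).trans (infEDist_le_hausdorffEDist_of_mem ha.1)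
  rw [edist_dist, edist_dist]
  exact ENNReal.ofReal_le_ofReal (dist_left_le_of_mem_uIcc (mem_uIcc_of_le hab (hb.2 hy)))

theorem edist_le_hausdorffEDist_of_isGreatest {a b : ℝ} (ha : IsGreatest s a)
    (hb : IsGreatest t b) : edist a b ≤ hausdorffEDist s t := by
  simpa only [id_eq, image_neg_eq_neg, hausdorffEDist_neg, edist_neg_neg] using
    edist_le_hausdorffEDist_of_isLeast (monotone_id.neg.map_isGreatest ha)
      (monotone_id.neg.map_isGreatest hb)

theorem bddBelow_of_hausdorffEDist_ne_top (h : hausdorffEDist s t ≠ ⊤) (ht : BddBelow t) :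
    BddBelow s := by
  obtain ⟨M, hM⟩ := ht
  set r := (hausdorffEDist s t).toReal + 1
  have hr : hausdorffEDist s t < ENNReal.ofReal r :=
    (ENNReal.lt_ofReal_iff_toReal_lt h).2 (lt_add_one _)
  refine ⟨M - r, fun x hx => ?_⟩
  obtain ⟨y, hy, hxy⟩ := exists_edist_lt_of_hausdorffEDist_lt hx hr
  have := (abs_sub_lt_iff.1 (edist_lt_ofReal.1 hxy)).2
  linarith [hM hy]

theorem bddBelow_congr_of_hausdorffEDist_ne_top (h : hausdorffEDist s t ≠ ⊤) :
    BddBelow s ↔ BddBelow t :=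
  ⟨bddBelow_of_hausdorffEDist_ne_top (hausdorffEDist_comm (s := s) ▸ h),
    bddBelow_of_hausdorffEDist_ne_top h⟩

theorem bddAbove_congr_of_hausdorffEDist_ne_top (h : hausdorffEDist s t ≠ ⊤) :
    BddAbove s ↔ BddAbove t := by
  rw [← bddBelow_neg, ← bddBelow_neg]
  exact bddBelow_congr_of_hausdorffEDist_ne_top (by rwa [hausdorffEDist_neg])

theorem hausdorffEDist_Ici_le (a b : ℝ) : hausdorffEDist (Ici a) (Ici b) ≤ edist a b := by
  have key : ∀ a b : ℝ, ∀ x ∈ Ici a, ∃ y ∈ Ici b, edist x y ≤ edist a b := fun a b x hx =>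
    ⟨max b x, le_max_left b x, by
      rw [edist_dist, edist_dist]
      refine ENNReal.ofReal_le_ofReal ?_
      calc dist x (max b x) = |max a x - max b x| := by rw [Real.dist_eq, max_eq_right hx.out]
        _ ≤ |a - b| := abs_max_sub_max_le_abs a b x⟩
  exact hausdorffEDist_le_of_mem_edist (key a b) (edist_comm a b ▸ key b a)

theorem hausdorffEDist_Iic_le (a b : ℝ) : hausdorffEDist (Iic a) (Iic b) ≤ edist a b := by
  rw [← neg_neg a, ← neg_neg b, ← neg_Ici, ← neg_Ici, hausdorffEDist_neg, edist_neg_neg]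
  exact hausdorffEDist_Ici_le _ _

theorem exists_mem_Icc_edist_le {a b c d x : ℝ} (hcd : c ≤ d) (hx : x ∈ Icc a b) :
    ∃ y ∈ Icc c d, edist x y ≤ max (edist a c) (edist b d) := by
  refine ⟨max c (min x d), ⟨le_max_left _ _, max_le hcd (min_le_right _ _)⟩, ?_⟩
  rw [edist_dist, edist_dist, edist_dist, ← ENNReal.ofReal_max]
  refine ENNReal.ofReal_le_ofReal ?_
  calc dist x (max c (min x d)) = |max a (min x b) - max c (min x d)| := by
        rw [Real.dist_eq, min_eq_left hx.2, max_eq_right hx.1]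
    _ ≤ max |a - c| |min x b - min x d| := abs_max_sub_max_le_max _ _ _ _
    _ ≤ max |a - c| (max |x - x| |b - d|) := max_le_max le_rfl (abs_min_sub_min_le_max _ _ _ _)
    _ = max (dist a c) (dist b d) := by simp [Real.dist_eq]

theorem hausdorffEDist_Icc_le {a b c d : ℝ} (hab : a ≤ b) (hcd : c ≤ d) :
    hausdorffEDist (Icc a b) (Icc c d) ≤ max (edist a c) (edist b d) :=
  hausdorffEDist_le_of_mem_edist (fun _ hx => exists_mem_Icc_edist_le hcd hx)
    (edist_comm a c ▸ edist_comm b d ▸ fun _ hx => exists_mem_Icc_edist_le hab hx)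

end Real

namespace CReal

open Real

theorem edist_eq (S U : CReal) : edist S U = hausdorffEDist (S.1 : Set ℝ) U.1 :=
  Closeds.edist_eq

theorem ext {S U : CReal} (h : (S.1 : Set ℝ) = U.1) : S = U :=
  Subtype.ext (SetLike.ext' h)

def ofUniv : CReal := ⟨⟨univ, isClosed_univ⟩, ⟨univ_nonempty, isPreconnected_univ⟩⟩

def ofIci (a : ℝ) : CReal := ⟨⟨Ici a, isClosed_Ici⟩, ⟨nonempty_Ici, isPreconnected_Ici⟩⟩

def ofIic (a : ℝ) : CReal := ⟨⟨Iic a, isClosed_Iic⟩, ⟨nonempty_Iic, isPreconnected_Iic⟩⟩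

def ofIcc (a b : ℝ) (hab : a ≤ b) : CReal :=
  ⟨⟨Icc a b, isClosed_Icc⟩, ⟨nonempty_Icc.2 hab, isPreconnected_Icc⟩⟩

theorem eq_ofUniv_or_ofIci_or_ofIic_or_ofIcc (S : CReal) :
    S = ofUniv ∨ (∃ a, S = ofIci a) ∨ (∃ a, S = ofIic a) ∨ ∃ a b h, S = ofIcc a b h := by
  have hc : IsConnected (S.1 : Set ℝ) := S.2
  have hcl : IsClosed (S.1 : Set ℝ) := S.1.isClosed
  by_cases hb : BddBelow (S.1 : Set ℝ) <;> by_cases ha : BddAbove (S.1 : Set ℝ)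
  · exact .inr <| .inr <| .inr ⟨_, _, csInf_le_csSup hc.nonempty hb ha,
      ext (eq_Icc_csInf_csSup_of_connected_bdd_closed hc hb ha hcl)⟩
  · exact .inr <| .inl ⟨_, ext (eq_Ici_csInf_of_connected_bdd_closed hc hb ha hcl)⟩
  · exact .inr <| .inr <| .inl ⟨_, ext (eq_Iic_csSup_of_connected_bdd_closed hc hb ha hcl)⟩
  · exact .inl (ext (hc.isPreconnected.eq_univ_of_unbounded hb ha))

/-- `p` and `q` stand for `BddBelow s` and `BddAbove s`; taking them as parameters lets
`toSum` be frozen on a neighbourhood (`toSum_eventuallyEq`). The `max _ 0` only serves to land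
in `[0, ∞)`. -/
noncomputable def toSumOf (p q : Prop) [Decidable p] [Decidable q] (s : Set ℝ) :
    PUnit ⊕ ℝ ⊕ ℝ ⊕ (ℝ × {y : ℝ // 0 ≤ y}) :=
  if p then
    if q then .inr (.inr (.inr (sInf s, ⟨max (sSup s - sInf s) 0, le_max_right _ _⟩)))
    else .inr (.inl (sInf s))
  else
    if q then .inr (.inr (.inl (sSup s))) else .inl PUnit.unit

open Classical in
noncomputable def toSum (S : CReal) : PUnit ⊕ ℝ ⊕ ℝ ⊕ (ℝ × {y : ℝ // 0 ≤ y}) :=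
  toSumOf (BddBelow (S.1 : Set ℝ)) (BddAbove (S.1 : Set ℝ)) S.1

noncomputable def ofSum : PUnit ⊕ ℝ ⊕ ℝ ⊕ (ℝ × {y : ℝ // 0 ≤ y}) → CReal :=
  Sum.elim (fun _ => ofUniv) <| Sum.elim ofIci <| Sum.elim ofIic fun p =>
    ofIcc p.1 (p.1 + p.2) (le_add_of_nonneg_right p.2.2)

theorem toSum_ofUniv : toSum ofUniv = .inl PUnit.unit := by
  simp [toSum, toSumOf, ofUniv, not_bddBelow_univ, not_bddAbove_univ]

theorem toSum_ofIci (a : ℝ) : toSum (ofIci a) = .inr (.inl a) := by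
  simp [toSum, toSumOf, ofIci, not_bddAbove_Ici, bddBelow_Ici]

theorem toSum_ofIic (a : ℝ) : toSum (ofIic a) = .inr (.inr (.inl a)) := by
  simp [toSum, toSumOf, ofIic, not_bddBelow_Iic, bddAbove_Iic]

theorem toSum_ofIcc {a b : ℝ} (hab : a ≤ b) :
    toSum (ofIcc a b hab) = .inr (.inr (.inr (a, ⟨b - a, sub_nonneg.2 hab⟩))) := by
  simp [toSum, toSumOf, ofIcc, hab]

theorem ofSum_toSum (S : CReal) : ofSum (toSum S) = S := by
  obtain rfl | ⟨a, rfl⟩ | ⟨a, rfl⟩ | ⟨a, b, hab, rfl⟩ := eq_ofUniv_or_ofIci_or_ofIic_or_ofIcc S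
  · rw [toSum_ofUniv]; rfl
  · rw [toSum_ofIci]; rfl
  · rw [toSum_ofIic]; rfl
  · rw [toSum_ofIcc]; exact ext (congrArg (Icc a) (add_sub_cancel a b))

theorem toSum_ofSum (x : PUnit ⊕ ℝ ⊕ ℝ ⊕ (ℝ × {y : ℝ // 0 ≤ y})) : toSum (ofSum x) = x := by
  rcases x with ⟨⟩ | a | a | ⟨a, r, hr⟩
  · exact toSum_ofUniv
  · exact toSum_ofIci a
  · exact toSum_ofIic a
  · simp [ofSum, toSum_ofIcc]

theorem eventually_hausdorffEDist_ne_top (S₀ : CReal) :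
    ∀ᶠ S in 𝓝 S₀, hausdorffEDist (S.1 : Set ℝ) S₀.1 ≠ ⊤ :=
  eventually_of_mem (eball_mem_nhds S₀ one_pos) fun S hS => by
    rw [← edist_eq]; exact ne_top_of_lt (mem_eball.1 hS)

theorem continuousAt_sInf {S₀ : CReal} (h : BddBelow (S₀.1 : Set ℝ)) :
    ContinuousAt (fun S : CReal => sInf (S.1 : Set ℝ)) S₀ := by
  refine continuousAt_of_eventually_edist_le <|
    (eventually_hausdorffEDist_ne_top S₀).mono fun S hS => ?_
  have hS' : BddBelow (S.1 : Set ℝ) := (bddBelow_congr_of_hausdorffEDist_ne_top hS).2 h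
  rw [edist_eq]
  exact edist_le_hausdorffEDist_of_isLeast (S.1.isClosed.isLeast_csInf S.2.nonempty hS')
    (S₀.1.isClosed.isLeast_csInf S₀.2.nonempty h)

theorem continuousAt_sSup {S₀ : CReal} (h : BddAbove (S₀.1 : Set ℝ)) :
    ContinuousAt (fun S : CReal => sSup (S.1 : Set ℝ)) S₀ := by
  refine continuousAt_of_eventually_edist_le <|
    (eventually_hausdorffEDist_ne_top S₀).mono fun S hS => ?_
  have hS' : BddAbove (S.1 : Set ℝ) := (bddAbove_congr_of_hausdorffEDist_ne_top hS).2 h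
  rw [edist_eq]
  exact edist_le_hausdorffEDist_of_isGreatest (S.1.isClosed.isGreatest_csSup S.2.nonempty hS')
    (S₀.1.isClosed.isGreatest_csSup S₀.2.nonempty h)

open Classical in
theorem toSum_eventuallyEq (S₀ : CReal) :
    toSum =ᶠ[𝓝 S₀] fun S => toSumOf (BddBelow (S₀.1 : Set ℝ)) (BddAbove (S₀.1 : Set ℝ)) S.1 :=
  (eventually_hausdorffEDist_ne_top S₀).mono fun S hS => by
    rw [toSum, bddBelow_congr_of_hausdorffEDist_ne_top hS,
      bddAbove_congr_of_hausdorffEDist_ne_top hS]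

theorem continuous_toSum : Continuous toSum := by
  refine continuous_iff_continuousAt.2 fun S₀ => ?_
  refine ContinuousAt.congr ?_ (toSum_eventuallyEq S₀).symm
  unfold toSumOf
  split_ifs with hb ha ha
  · have hclip : Continuous fun t : ℝ => (⟨max t 0, le_max_right t 0⟩ : {y : ℝ // 0 ≤ y}) :=
      (continuous_id.max continuous_const).subtype_mk _
    exact (continuous_inr.comp (continuous_inr.comp continuous_inr)).continuousAt.comp
      ((continuousAt_sInf hb).prodMk
        (hclip.continuousAt.comp ((continuousAt_sSup ha).sub (continuousAt_sInf hb))))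
  · exact (continuous_inr.comp continuous_inl).continuousAt.comp (continuousAt_sInf hb)
  · exact (continuous_inr.comp (continuous_inr.comp continuous_inl)).continuousAt.comp
      (continuousAt_sSup ha)
  · exact continuousAt_const

theorem continuous_ofIci : Continuous ofIci :=
  (LipschitzWith.of_edist_le fun a b =>
    (edist_eq _ _).trans_le (hausdorffEDist_Ici_le a b)).continuous

theorem continuous_ofIic : Continuous ofIic :=
  (LipschitzWith.of_edist_le fun a b =>
    (edist_eq _ _).trans_le (hausdorffEDist_Iic_le a b)).continuous

theorem continuous_ofIcc : Continuous fun p : {p : ℝ × ℝ // p.1 ≤ p.2} => ofIcc p.1.1 p.1.2 p.2 :=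
  (LipschitzWith.of_edist_le fun p q => (edist_eq _ _).trans_le <|
    (hausdorffEDist_Icc_le p.2 q.2).trans_eq (Prod.edist_eq _ _).symm).continuous

theorem continuous_ofSum : Continuous ofSum := by
  have hIcc : Continuous fun p : ℝ × {y : ℝ // 0 ≤ y} =>
      ofIcc p.1 (p.1 + p.2) (le_add_of_nonneg_right p.2.2) :=
    continuous_ofIcc.comp (f := fun p : ℝ × {y : ℝ // 0 ≤ y} =>
      (⟨(p.1, p.1 + p.2), le_add_of_nonneg_right p.2.2⟩ : {p : ℝ × ℝ // p.1 ≤ p.2})) (by fun_prop)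
  exact continuous_const.sumElim (continuous_ofIci.sumElim (continuous_ofIic.sumElim hIcc))

noncomputable def homeomorphSum : CReal ≃ₜ PUnit ⊕ ℝ ⊕ ℝ ⊕ (ℝ × {y : ℝ // 0 ≤ y}) where
  toFun := toSum
  invFun := ofSum
  left_inv := ofSum_toSum
  right_inv := toSum_ofSum
  continuous_toFun := continuous_toSum
  continuous_invFun := continuous_ofSum

end CReal

/-- `C(ℝ)` is homeomorphic to `{0} ⊔ ℝ ⊔ ℝ ⊔ (ℝ × [0,∞))`, via the map sending `ℝ` to the
point, `[a,∞)` to `a` in the first copy of `ℝ`, `(-∞,a]` to `a` in the second copy of `ℝ`,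
and `[a,b]` to `(a, b - a) ∈ ℝ × [0,∞)`. -/
theorem stmt_5 :
    ∃ h : CReal ≃ₜ (PUnit ⊕ ℝ ⊕ ℝ ⊕ (ℝ × {y : ℝ // 0 ≤ y})),
      (h ⟨⟨univ, isClosed_univ⟩, ⟨univ_nonempty, isPreconnected_univ⟩⟩ = Sum.inl PUnit.unit) ∧
      (∀ a : ℝ, h ⟨⟨Ici a, isClosed_Ici⟩, ⟨nonempty_Ici, isPreconnected_Ici⟩⟩
          = Sum.inr (Sum.inl a)) ∧
      (∀ a : ℝ, h ⟨⟨Iic a, isClosed_Iic⟩, ⟨nonempty_Iic, isPreconnected_Iic⟩⟩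
          = Sum.inr (Sum.inr (Sum.inl a))) ∧
      (∀ (a b : ℝ) (hab : a ≤ b),
        h ⟨⟨Icc a b, isClosed_Icc⟩, ⟨(nonempty_Icc.2 hab), isPreconnected_Icc⟩⟩
          = Sum.inr (Sum.inr (Sum.inr (a, ⟨b - a, sub_nonneg.2 hab⟩)))) :=
  ⟨CReal.homeomorphSum, CReal.toSum_ofUniv, CReal.toSum_ofIci, CReal.toSum_ofIic,
    fun _ _ => CReal.toSum_ofIcc⟩
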